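/- Let p be an odd prime, u ∈ {1,…,p-1}, and σ the field automorphism of Q(ζ_{p²}) sending ζ_{p²} ↦ ζ_{p²}^m for m a primitive root mod p (acting on p-th roots by ζ_p ↦ ζ_p^m). Then applying σ to the values of the 3-cocycle κ^u (κ as defined via exp(2πi [l]([j]+[k]-[j+k])/p²)) yields the cocycle κ^{mu mod p} times a coboundary; in particular the Galois orbit of the cohomology classes {[κ^u] : u = 1,…,p-1} under σ is a single orbit of size p-1. -/

import Mathlib

/-- The explicit 3-cocycle `κ(j,k,l) = exp(2πi [l]([j]+[k]-[j+k]) / p²)` on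
`Z/pZ`, where `[m] ∈ {0,…,p-1}` is the canonical representative. -/
noncomputable def kappa (p : ℕ) (j k l : ZMod p) : ℂ :=
  Complex.exp (2 * Real.pi * Complex.I *
    ((l.val : ℂ) * ((j.val : ℂ) + (k.val : ℂ) - ((j + k).val : ℂ))) / (p ^ 2))

/-!
Since `[j] + [k] - [j+k]` is `p` times the carry of `[j] + [k]`, every value of `κ` is a power
of `ζ_p = exp(2πi/p)`, so `κ^a` only depends on `a mod p`; this gives the first claim with the
trivial coboundary. Transitivity is the statement that a primitive root generates `(ZMod p)ˣ`.
For distinctness, multiply a relation `κ^a = κ^b · δμ` over `y` at `x = z = 1`: the coboundary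
cancels out of the product, while `∏_y κ(1,y,1) = ζ_p` because the carries of `1 + y` sum to `1`;
hence `ζ_p^a = ζ_p^b` and `a ≡ b [MOD p]`.
-/
open Complex Finset
open scoped Real

def coboundary {G M₀ : Type*} [Add G] [Inv M₀] [Mul M₀] (μ : G → G → M₀) (x y z : G) : M₀ :=
  μ y z * μ x (y + z) * (μ (x + y) z)⁻¹ * (μ x y)⁻¹

theorem prod_coboundary_eq_one {G G₀ : Type*} [AddCommGroup G] [Fintype G] [CommGroupWithZero G₀]
    {μ : G → G → G₀} (hμ : ∀ x y, μ x y ≠ 0) (x z : G) : ∏ y, coboundary μ x y z = 1 := by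
  have h₁ : ∏ y, μ x (y + z) = ∏ y, μ x y := Equiv.prod_comp (Equiv.addRight z) (μ x)
  have h₂ : ∏ y, μ (x + y) z = ∏ y, μ y z := Equiv.prod_comp (Equiv.addLeft x) (μ · z)
  simp only [coboundary, prod_mul_distrib, prod_inv_distrib, h₁, h₂]
  rw [mul_right_comm _ _ (∏ y, μ y z)⁻¹, mul_inv_cancel₀ (prod_ne_zero_iff.mpr fun y _ => hμ y z),
    one_mul, mul_inv_cancel₀ (prod_ne_zero_iff.mpr fun y _ => hμ x y)]

theorem exists_pow_eq_of_orderOf_eq_card_sub_one {G₀ : Type*} [GroupWithZero G₀] [Finite G₀]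
    {g : G₀} (hg : orderOf g = Nat.card G₀ - 1) {a : G₀} (ha : a ≠ 0) : ∃ r : ℕ, g ^ r = a := by
  have hg₀ : g ≠ 0 := by
    rintro rfl
    have : 0 < Nat.card G₀ - 1 := by
      rw [← Nat.card_units]; exact Nat.card_pos
    simp_all
  have htop : Subgroup.zpowers (Units.mk0 g hg₀) = ⊤ :=
    Subgroup.eq_top_of_card_eq _ <| by
      rw [Nat.card_zpowers, ← orderOf_units, Units.val_mk0, hg, Nat.card_units]
  obtain ⟨r, hr⟩ := mem_powers_iff_mem_zpowers.mpr (htop ▸ Subgroup.mem_top (Units.mk0 a ha))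
  exact ⟨r, by simpa using congrArg Units.val hr⟩

section kappa

variable {p : ℕ} [NeZero p]

theorem val_add_val_eq (x y : ZMod p) :
    x.val + y.val = (x + y).val + p * ((x.val + y.val) / p) := by
  rw [ZMod.val_add]; exact (Nat.mod_add_div _ _).symm

theorem kappa_eq_pow (x y z : ZMod p) :
    kappa p x y z = exp (2 * π * I / p) ^ (z.val * ((x.val + y.val) / p)) := by
  have hp : (p : ℂ) ≠ 0 := NeZero.ne _
  have hcarry : (x.val : ℂ) + y.val - (x + y).val = p * ((x.val + y.val) / p : ℕ) := by
    rw [sub_eq_iff_eq_add']; exact_mod_cast val_add_val_eq x y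
  rw [kappa, hcarry, ← exp_nat_mul]
  congr 1
  push_cast
  field_simp

theorem kappa_pow_card (x y z : ZMod p) : kappa p x y z ^ p = 1 := by
  rw [kappa_eq_pow, pow_right_comm, (isPrimitiveRoot_exp p (NeZero.ne p)).pow_eq_one, one_pow]

theorem kappa_pow_mod (x y z : ZMod p) (a : ℕ) : kappa p x y z ^ (a % p) = kappa p x y z ^ a := by
  conv_rhs => rw [← Nat.mod_add_div a p, pow_add, pow_mul, kappa_pow_card, one_pow, mul_one]

theorem prod_kappa (x z : ZMod p) :
    ∏ y, kappa p x y z = exp (2 * π * I / p) ^ (z.val * x.val) := by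
  have hp : (p : ℂ) ≠ 0 := NeZero.ne _
  have hshift : ∑ y : ZMod p, ((x + y).val : ℂ) = ∑ y : ZMod p, (y.val : ℂ) :=
    Equiv.sum_comp (Equiv.addLeft x) fun y => (y.val : ℂ)
  have hcarry : ∑ y : ZMod p, ((x.val : ℂ) + y.val - (x + y).val) = p * x.val := by
    rw [sum_sub_distrib, sum_add_distrib, hshift, sum_const, card_univ, ZMod.card]
    simp
  simp only [kappa, ← exp_sum, ← mul_sum, ← sum_div, hcarry, ← exp_nat_mul]
  congr 1
  push_cast
  field_simp

theorem modEq_of_kappa_pow_eq_mul_coboundary [Fact (1 < p)] {a b : ℕ} {μ : ZMod p → ZMod p → ℂ}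
    (hμ : ∀ x y, μ x y ≠ 0)
    (h : ∀ x y z, kappa p x y z ^ a = kappa p x y z ^ b * coboundary μ x y z) :
    a ≡ b [MOD p] := by
  have hζ := isPrimitiveRoot_exp p (NeZero.ne p)
  have hprod : (∏ y, kappa p 1 y 1) ^ a = (∏ y, kappa p 1 y 1) ^ b := by
    simp only [← prod_pow, h, prod_mul_distrib, prod_coboundary_eq_one hμ, mul_one]
  rw [prod_kappa, ZMod.val_one, mul_one, pow_one] at hprod
  exact hζ.eq_orderOf ▸ (hζ.isOfFinOrder (NeZero.ne p)).pow_inj_mod.mp hprod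

end kappa

theorem stmt_19_general (p u m m' : ℕ) (hp : p.Prime)
    (hm : orderOf (m : ZMod p) = p - 1)
    (hm' : m' ≡ m [MOD p]) :
    (∃ μ : ZMod p → ZMod p → ℂ, (∀ x y, μ x y ≠ 0) ∧
      ∀ x y z : ZMod p,
        (kappa p x y z) ^ (m' * u) =
          (kappa p x y z) ^ ((m * u) % p) *
            (μ y z * μ x (y + z) * (μ (x + y) z)⁻¹ * (μ x y)⁻¹)) ∧
    (∀ u₁ u₂ : ℕ, 1 ≤ u₁ → u₁ ≤ p - 1 → 1 ≤ u₂ → u₂ ≤ p - 1 →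
      ∃ r : ℕ, (m ^ r * u₁) % p = u₂ % p) ∧
    (∀ u₁ u₂ : ℕ, 1 ≤ u₁ → u₁ ≤ p - 1 → 1 ≤ u₂ → u₂ ≤ p - 1 →
      (∃ μ : ZMod p → ZMod p → ℂ, (∀ x y, μ x y ≠ 0) ∧
        ∀ x y z : ZMod p,
          (kappa p x y z) ^ u₁ =
            (kappa p x y z) ^ u₂ *
              (μ y z * μ x (y + z) * (μ (x + y) z)⁻¹ * (μ x y)⁻¹)) → u₁ = u₂) := by
  have := Fact.mk hp
  have natCast_ne_zero {n : ℕ} (h₁ : 1 ≤ n) (h₂ : n ≤ p - 1) : (n : ZMod p) ≠ 0 :=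
    (ZMod.natCast_eq_zero_iff _ _).not.mpr (Nat.not_dvd_of_pos_of_lt h₁ (by omega))
  refine ⟨⟨fun _ _ => 1, fun _ _ => one_ne_zero, fun x y z => ?_⟩, ?_, ?_⟩
  · simp only [inv_one, mul_one]
    rw [← kappa_pow_mod x y z (m' * u), hm'.mul_right u]
  · intro u₁ u₂ h₁ h₁' h₂ h₂'
    obtain ⟨r, hr⟩ := exists_pow_eq_of_orderOf_eq_card_sub_one (by rwa [Nat.card_zmod])
      (div_ne_zero (natCast_ne_zero h₂ h₂') (natCast_ne_zero h₁ h₁'))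
    refine ⟨r, (ZMod.natCast_eq_natCast_iff' _ _ _).mp ?_⟩
    rw [Nat.cast_mul, Nat.cast_pow, hr, div_mul_cancel₀ _ (natCast_ne_zero h₁ h₁')]
  · rintro u₁ u₂ - hu₁ - hu₂ ⟨μ, hμ, h⟩
    have hp₁ := hp.one_lt
    exact (modEq_of_kappa_pow_eq_mul_coboundary hμ h).eq_of_lt_of_lt (by omega) (by omega)

/-- Applying the Galois automorphism `σ : ζ_{p²} ↦ ζ_{p²}^{m'}` (`m' ≡ m mod p`,
`m` a primitive root mod `p`) to the values of `κ^u` yields `κ^{mu mod p}`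
times a coboundary; moreover the classes `[κ^u]`, `u = 1,…,p-1`, form a single
Galois orbit of size `p-1`: multiplication by `m` acts transitively on
`{1,…,p-1}` mod `p`, and the `p-1` cohomology classes are pairwise distinct. -/
theorem stmt_19 (p u m m' : ℕ) (hp : p.Prime) (hodd : Odd p)
    (hu1 : 1 ≤ u) (hu2 : u ≤ p - 1) (hm : orderOf (m : ZMod p) = p - 1)
    (hm' : m' ≡ m [MOD p]) :
    (∃ μ : ZMod p → ZMod p → ℂ, (∀ x y, μ x y ≠ 0) ∧
      ∀ x y z : ZMod p,
        (kappa p x y z) ^ (m' * u) =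
          (kappa p x y z) ^ ((m * u) % p) *
            (μ y z * μ x (y + z) * (μ (x + y) z)⁻¹ * (μ x y)⁻¹)) ∧
    (∀ u₁ u₂ : ℕ, 1 ≤ u₁ → u₁ ≤ p - 1 → 1 ≤ u₂ → u₂ ≤ p - 1 →
      ∃ r : ℕ, (m ^ r * u₁) % p = u₂ % p) ∧
    (∀ u₁ u₂ : ℕ, 1 ≤ u₁ → u₁ ≤ p - 1 → 1 ≤ u₂ → u₂ ≤ p - 1 →
      (∃ μ : ZMod p → ZMod p → ℂ, (∀ x y, μ x y ≠ 0) ∧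
        ∀ x y z : ZMod p,
          (kappa p x y z) ^ u₁ =
            (kappa p x y z) ^ u₂ *
              (μ y z * μ x (y + z) * (μ (x + y) z)⁻¹ * (μ x y)⁻¹)) → u₁ = u₂) :=
  stmt_19_general p u m m' hp hm hm'
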